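/- For any negative first-order formula F and any finite set Y of non-equality atoms, NFES_F(Y) is logically equivalent to F; that is, the universal closure of NFES_F(Y) ↔ F is logically valid. -/

import Mathlib

set_option linter.unusedVariables false

namespace SMLF

/-- Terms: object variables (named by naturals) and object constants.
There are no function constants of positive arity. -/
inductive Term (C : Type) where
  | var : ℕ → Term C
  | const : C → Term C

variable {C P D : Type} {ar : P → ℕ}

def Term.eval (cI : C → D) (v : ℕ → D) : Term C → D
  | .var x => v x
  | .const c => cI c

def Term.vars : Term C → Set ℕ
  | .var x => {x}
  | .const _ => ∅

def Term.consts : Term C → Set C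
  | .var _ => ∅
  | .const c => {c}

def Term.subst (θ : ℕ → Term C) : Term C → Term C
  | .var x => θ x
  | .const c => .const c

def Term.isVar : Term C → Prop
  | .var _ => True
  | .const _ => False

/-- A (non-equality) atom `p(t₁,…,tₖ)`. -/
abbrev Atom (C P : Type) (ar : P → ℕ) := Σ p : P, Fin (ar p) → Term C

def Atom.subst (θ : ℕ → Term C) (a : Atom C P ar) : Atom C P ar :=
  ⟨a.1, fun i => (a.2 i).subst θ⟩

def Atom.vars (a : Atom C P ar) : Set ℕ := {x | ∃ i, a.2 i = Term.var x}

/-- An interpretation of the predicate constants over universe `D`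
(also used for tuples `u` of predicate variables). -/
def PredI (P : Type) (ar : P → ℕ) (D : Type) : Type := ∀ p : P, (Fin (ar p) → D) → Prop

/-- `u ≤ p` : conjunction of ∀x(uᵢ(x) → pᵢ(x)). -/
def PredI.le (uI pI : PredI P ar D) : Prop := ∀ p xs, uI p xs → pI p xs

/-- `u = p` : conjunction of ∀x(uᵢ(x) ↔ pᵢ(x)). -/
def PredI.eqv (uI pI : PredI P ar D) : Prop := ∀ p xs, uI p xs ↔ pI p xs

/-- `u < p` : (u ≤ p) ∧ ¬(u = p). -/
def PredI.lt (uI pI : PredI P ar D) : Prop := PredI.le uI pI ∧ ¬ PredI.eqv uI pI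

/-- `Nonempty(u)` : ∃x¹ u₁(x¹) ∨ … ∨ ∃xⁿ uₙ(xⁿ). -/
def PredI.nonemp (uI : PredI P ar D) : Prop := ∃ p xs, uI p xs

/-- First-order formulas (¬F is shorthand for F → ⊥). -/
inductive Fml (C P : Type) (ar : P → ℕ) where
  | atom : (p : P) → (Fin (ar p) → Term C) → Fml C P ar
  | eq : Term C → Term C → Fml C P ar
  | bot : Fml C P ar
  | and : Fml C P ar → Fml C P ar → Fml C P ar
  | or : Fml C P ar → Fml C P ar → Fml C P ar
  | imp : Fml C P ar → Fml C P ar → Fml C P ar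
  | all : ℕ → Fml C P ar → Fml C P ar
  | ex : ℕ → Fml C P ar → Fml C P ar

/-- Tarskian satisfaction `I,v ⊨ F`. -/
def Fml.sat (cI : C → D) (pI : PredI P ar D) : Fml C P ar → (ℕ → D) → Prop
  | .atom p t, v => pI p (fun i => (t i).eval cI v)
  | .eq t₁ t₂, v => t₁.eval cI v = t₂.eval cI v
  | .bot, _ => False
  | .and F G, v => F.sat cI pI v ∧ G.sat cI pI v
  | .or F G, v => F.sat cI pI v ∨ G.sat cI pI v
  | .imp F G, v => F.sat cI pI v → G.sat cI pI v
  | .all x F, v => ∀ d : D, F.sat cI pI (Function.update v x d)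
  | .ex x F, v => ∃ d : D, F.sat cI pI (Function.update v x d)

/-- Satisfaction of a sentence (truth under every valuation). -/
def Fml.satSent (cI : C → D) (pI : PredI P ar D) (F : Fml C P ar) : Prop :=
  ∀ v : ℕ → D, F.sat cI pI v

/-- Satisfaction of `F*(u)` (atoms read via `uI`, the `F → G` clause also keeps `F → G`). -/
def Fml.satStar (cI : C → D) (pI uI : PredI P ar D) : Fml C P ar → (ℕ → D) → Prop
  | .atom p t, v => uI p (fun i => (t i).eval cI v)
  | .eq t₁ t₂, v => t₁.eval cI v = t₂.eval cI v
  | .bot, _ => False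
  | .and F G, v => F.satStar cI pI uI v ∧ G.satStar cI pI uI v
  | .or F G, v => F.satStar cI pI uI v ∨ G.satStar cI pI uI v
  | .imp F G, v => (F.satStar cI pI uI v → G.satStar cI pI uI v) ∧ (F.sat cI pI v → G.sat cI pI v)
  | .all x F, v => ∀ d : D, F.satStar cI pI uI (Function.update v x d)
  | .ex x F, v => ∃ d : D, F.satStar cI pI uI (Function.update v x d)

/-- `I ⊨ SM[F]` for a sentence `F`: `F ∧ ¬∃u((u < p) ∧ F*(u))`. -/
def satSM (cI : C → D) (pI : PredI P ar D) (F : Fml C P ar) : Prop :=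
  F.satSent cI pI ∧
    ¬ ∃ uI : PredI P ar D, PredI.lt uI pI ∧ ∀ v : ℕ → D, F.satStar cI pI uI v

/-- Satisfaction of `NES_F(u)`. -/
def Fml.satNES (cI : C → D) (pI uI : PredI P ar D) : Fml C P ar → (ℕ → D) → Prop
  | .atom p t, v => pI p (fun i => (t i).eval cI v) ∧ ¬ uI p (fun i => (t i).eval cI v)
  | .eq t₁ t₂, v => t₁.eval cI v = t₂.eval cI v
  | .bot, _ => False
  | .and F G, v => F.satNES cI pI uI v ∧ G.satNES cI pI uI v
  | .or F G, v => F.satNES cI pI uI v ∨ G.satNES cI pI uI v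
  | .imp F G, v => (F.satNES cI pI uI v → G.satNES cI pI uI v) ∧ (F.sat cI pI v → G.sat cI pI v)
  | .all x F, v => ∀ d : D, F.satNES cI pI uI (Function.update v x d)
  | .ex x F, v => ∃ d : D, F.satNES cI pI uI (Function.update v x d)

def Fml.freeVars : Fml C P ar → Set ℕ
  | .atom _ t => ⋃ i, (t i).vars
  | .eq t₁ t₂ => t₁.vars ∪ t₂.vars
  | .bot => ∅
  | .and F G => F.freeVars ∪ G.freeVars
  | .or F G => F.freeVars ∪ G.freeVars
  | .imp F G => F.freeVars ∪ G.freeVars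
  | .all x F => F.freeVars \ {x}
  | .ex x F => F.freeVars \ {x}

/-- The list of quantified (bound) variable occurrences, in order. -/
def Fml.quantVars : Fml C P ar → List ℕ
  | .atom _ _ => []
  | .eq _ _ => []
  | .bot => []
  | .and F G => F.quantVars ++ G.quantVars
  | .or F G => F.quantVars ++ G.quantVars
  | .imp F G => F.quantVars ++ G.quantVars
  | .all x F => x :: F.quantVars
  | .ex x F => x :: F.quantVars

/-- Rectified form: no variable is both bound and free, and quantifiers
are followed by pairwise distinct variables. -/
def Fml.rectified (F : Fml C P ar) : Prop :=
  F.quantVars.Nodup ∧ ∀ x ∈ F.quantVars, x ∉ F.freeVars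

def Fml.preds : Fml C P ar → Set P
  | .atom p _ => {p}
  | .eq _ _ => ∅
  | .bot => ∅
  | .and F G => F.preds ∪ G.preds
  | .or F G => F.preds ∪ G.preds
  | .imp F G => F.preds ∪ G.preds
  | .all _ F => F.preds
  | .ex _ F => F.preds

def Fml.consts : Fml C P ar → Set C
  | .atom _ t => ⋃ i, (t i).consts
  | .eq t₁ t₂ => t₁.consts ∪ t₂.consts
  | .bot => ∅
  | .and F G => F.consts ∪ G.consts
  | .or F G => F.consts ∪ G.consts
  | .imp F G => F.consts ∪ G.consts
  | .all _ F => F.consts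
  | .ex _ F => F.consts

/-- All (non-equality) atoms occurring in a formula. -/
def Fml.atomsOf : Fml C P ar → Set (Atom C P ar)
  | .atom p t => {⟨p, t⟩}
  | .eq _ _ => ∅
  | .bot => ∅
  | .and F G => F.atomsOf ∪ G.atomsOf
  | .or F G => F.atomsOf ∪ G.atomsOf
  | .imp F G => F.atomsOf ∪ G.atomsOf
  | .all _ F => F.atomsOf
  | .ex _ F => F.atomsOf

def Fml.isNegativeB : Fml C P ar → Bool
  | .atom _ _ => false
  | .eq _ _ => true
  | .bot => true
  | .and F G => F.isNegativeB && G.isNegativeB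
  | .or F G => F.isNegativeB && G.isNegativeB
  | .imp _ G => G.isNegativeB
  | .all _ F => F.isNegativeB
  | .ex _ F => F.isNegativeB

/-- A formula is negative if every occurrence of every predicate constant in it
belongs to the antecedent of an implication. -/
def Fml.isNegative (F : Fml C P ar) : Prop := F.isNegativeB = true

/-- Atoms with a strictly positive occurrence. -/
def Fml.spAtoms : Fml C P ar → Set (Atom C P ar)
  | .atom p t => {⟨p, t⟩}
  | .eq _ _ => ∅
  | .bot => ∅
  | .and F G => F.spAtoms ∪ G.spAtoms
  | .or F G => F.spAtoms ∪ G.spAtoms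
  | .imp _ G => G.spAtoms
  | .all _ F => F.spAtoms
  | .ex _ F => F.spAtoms

/-- Implications `G → H` with a strictly positive occurrence. -/
def Fml.spImps : Fml C P ar → Set (Fml C P ar × Fml C P ar)
  | .atom _ _ => ∅
  | .eq _ _ => ∅
  | .bot => ∅
  | .and F G => F.spImps ∪ G.spImps
  | .or F G => F.spImps ∪ G.spImps
  | .imp F G => insert (F, G) G.spImps
  | .all _ F => F.spImps
  | .ex _ F => F.spImps

/-- Atoms with an occurrence of polarity `b` (`true` = positive) that does not
belong to any occurrence of a negative subformula. -/
def Fml.polNN : Bool → Fml C P ar → Set (Atom C P ar)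
  | true, .atom p t => {⟨p, t⟩}
  | false, .atom _ _ => ∅
  | _, .eq _ _ => ∅
  | _, .bot => ∅
  | b, .and F G =>
      if (Fml.and F G).isNegativeB then ∅ else Fml.polNN b F ∪ Fml.polNN b G
  | b, .or F G =>
      if (Fml.or F G).isNegativeB then ∅ else Fml.polNN b F ∪ Fml.polNN b G
  | b, .imp F G =>
      if (Fml.imp F G).isNegativeB then ∅ else Fml.polNN (!b) F ∪ Fml.polNN b G
  | b, .all x F => if (Fml.all x F).isNegativeB then ∅ else Fml.polNN b F
  | b, .ex x F => if (Fml.ex x F).isNegativeB then ∅ else Fml.polNN b F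

/-- `a` depends on `b` in `F`: `a` weakly depends on `b` in an implication that has a
strictly positive occurrence in `F`. -/
def Fml.depends (F : Fml C P ar) (a b : Atom C P ar) : Prop :=
  ∃ GH ∈ F.spImps, a ∈ (Prod.snd GH).spAtoms ∧ b ∈ Fml.polNN true (Prod.fst GH)

/-- `E_F(v,u)`. -/
def satE (cI : C → D) (F : Fml C P ar) (vI uI : PredI P ar D) : Prop :=
  ∃ a b : Atom C P ar, F.depends a b ∧ ∃ θ : ℕ → D,
    vI a.1 (fun i => (a.2 i).eval cI θ) ∧ uI b.1 (fun i => (b.2 i).eval cI θ) ∧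
      ¬ vI b.1 (fun i => (b.2 i).eval cI θ)

/-- `SC_F(u)` : Nonempty(u) ∧ ∀v((v < u) ∧ Nonempty(v) → E_F(v,u)). -/
def satSC (cI : C → D) (F : Fml C P ar) (uI : PredI P ar D) : Prop :=
  PredI.nonemp uI ∧
    ∀ vI : PredI P ar D, PredI.lt vI uI → PredI.nonemp vI → satE cI F vI uI

/-- `Loop_F(u)` : SC_F(u) ∨ (Nonempty(u) ∧ ∀v((v ≤ u) ∧ SC_F(v) → E_F(v,u))). -/
def satLoopF (cI : C → D) (F : Fml C P ar) (uI : PredI P ar D) : Prop :=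
  satSC cI F uI ∨ (PredI.nonemp uI ∧
    ∀ vI : PredI P ar D, PredI.le vI uI → satSC cI F vI → satE cI F vI uI)

/-- Semantic atoms `pᵢ(ξ⃗*)`, where `ξ⃗` is a tuple of universe elements. -/
abbrev SAtom (P : Type) (ar : P → ℕ) (D : Type) := Σ p : P, Fin (ar p) → D

/-- Edges of the dependency graph of `F` w.r.t. an interpretation. -/
def edgeWrt (cI : C → D) (F : Fml C P ar) (a b : SAtom P ar D) : Prop :=
  ∃ a0 b0 : Atom C P ar, F.depends a0 b0 ∧ ∃ θ : ℕ → D,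
    (⟨a0.1, fun i => (a0.2 i).eval cI θ⟩ : SAtom P ar D) = a ∧
    (⟨b0.1, fun i => (b0.2 i).eval cI θ⟩ : SAtom P ar D) = b

/-- The subgraph induced by `Y` is strongly connected. -/
def SCin {V : Type} (E : V → V → Prop) (Y : Set V) : Prop :=
  ∀ a ∈ Y, ∀ b ∈ Y, Relation.ReflTransGen (fun x y => x ∈ Y ∧ y ∈ Y ∧ E x y) a b

/-- A loop of `F` w.r.t. `I`: nonempty (possibly infinite) set of semantic atoms
inducing a strongly connected subgraph of the dependency graph of `F` w.r.t. `I`. -/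
def isLoopWrt (cI : C → D) (F : Fml C P ar) (Y : Set (SAtom P ar D)) : Prop :=
  Y.Nonempty ∧ SCin (edgeWrt cI F) Y

/-- An unbounded set of `F` w.r.t. `I`. -/
def isUnboundedWrt (cI : C → D) (F : Fml C P ar) (Y : Set (SAtom P ar D)) : Prop :=
  Y.Nonempty ∧ ∀ Z ⊆ Y, Z.Nonempty → SCin (edgeWrt cI F) Z →
    ∃ a ∈ Z, ∃ b ∈ Y \ Z, edgeWrt cI F a b

/-- An extended loop of `F` w.r.t. `I`: a loop or an unbounded set. -/
def isExtLoopWrt (cI : C → D) (F : Fml C P ar) (Y : Set (SAtom P ar D)) : Prop :=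
  isLoopWrt cI F Y ∨ isUnboundedWrt cI F Y

/-- Edges of the first-order dependency graph of `F`. -/
def foEdge (F : Fml C P ar) (a b : Atom C P ar) : Prop :=
  ∃ a0 b0 : Atom C P ar, F.depends a0 b0 ∧ ∃ θ : ℕ → Term C,
    a0.subst θ = a ∧ b0.subst θ = b

/-- A first-order loop of `F`. -/
def isFOLoop (F : Fml C P ar) (Y : Set (Atom C P ar)) : Prop :=
  Y.Finite ∧ Y.Nonempty ∧ SCin (foEdge F) Y

/-- Normal form: no object constants occur in strictly positive occurrences of atoms. -/
def Fml.normalForm (F : Fml C P ar) : Prop :=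
  ∀ a ∈ F.spAtoms, ∀ i, (a.2 i).isVar

/-- `Y₁` subsumes `Y₂`. -/
def subsumes (Y₁ Y₂ : Set (Atom C P ar)) : Prop :=
  ∃ θ : ℕ → Term C, Atom.subst θ '' Y₁ = Y₂

/-- Satisfaction of `NFES_F(Y)`; the terms of the atoms in `Y` are evaluated under the
outer valuation `w` (implementing the renaming of the bound variables of `F` apart
from `Y`), the terms of `F` under the current valuation `v`. -/
def Fml.satNFES (cI : C → D) (pI : PredI P ar D) (Y : Set (Atom C P ar)) (w : ℕ → D) :
    Fml C P ar → (ℕ → D) → Prop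
  | .atom p t, v => pI p (fun i => (t i).eval cI v) ∧
      ∀ t' : Fin (ar p) → Term C, (⟨p, t'⟩ : Atom C P ar) ∈ Y →
        ¬ ∀ i, (t i).eval cI v = (t' i).eval cI w
  | .eq t₁ t₂, v => t₁.eval cI v = t₂.eval cI v
  | .bot, _ => False
  | .and F G, v => F.satNFES cI pI Y w v ∧ G.satNFES cI pI Y w v
  | .or F G, v => F.satNFES cI pI Y w v ∨ G.satNFES cI pI Y w v
  | .imp F G, v =>
      (F.satNFES cI pI Y w v → G.satNFES cI pI Y w v) ∧ (F.sat cI pI v → G.sat cI pI v)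
  | .all x F, v => ∀ d : D, F.satNFES cI pI Y w (Function.update v x d)
  | .ex x F, v => ∃ d : D, F.satNFES cI pI Y w (Function.update v x d)

/-- Truth of an atom of `Y` under valuation `w`. -/
def Atom.holds (cI : C → D) (pI : PredI P ar D) (w : ℕ → D) (a : Atom C P ar) : Prop :=
  pI a.1 (fun i => (a.2 i).eval cI w)

/-- `I ⊨ FLF_F(Y)` : the universal closure (over the variables of `Y`) of
`⋀Y → ¬NFES_F(Y)`. -/
def satFLF (cI : C → D) (pI : PredI P ar D) (F : Fml C P ar) (Y : Set (Atom C P ar)) : Prop :=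
  ∀ w : ℕ → D, (∀ a ∈ Y, a.holds cI pI w) → ¬ F.satNFES cI pI Y w w

/-- Restricted variables `RV(F)`. -/
def Fml.RV : Fml C P ar → Set ℕ
  | .atom _ t => ⋃ i, (t i).vars
  | .eq (.var _) (.var _) => ∅
  | .eq t₁ t₂ => t₁.vars ∪ t₂.vars
  | .bot => ∅
  | .and F G => F.RV ∪ G.RV
  | .or F G => F.RV ∩ G.RV
  | .imp _ _ => ∅
  | .all x F => F.RV \ {x}
  | .ex x F => F.RV \ {x}

/-- The unsafe variables of `F`: variables with an occurrence not in `∀x`, `∃x`, nor in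
any subformula `G → H` with `x ∈ RV(G)`. -/
def Fml.unsafeVars : Fml C P ar → Set ℕ
  | .atom _ t => ⋃ i, (t i).vars
  | .eq t₁ t₂ => t₁.vars ∪ t₂.vars
  | .bot => ∅
  | .and F G => F.unsafeVars ∪ G.unsafeVars
  | .or F G => F.unsafeVars ∪ G.unsafeVars
  | .imp F G => (F.unsafeVars ∪ G.unsafeVars) \ F.RV
  | .all _ F => F.unsafeVars
  | .ex _ F => F.unsafeVars

/-- `I ⊨ U_F`. -/
def satU (cI : C → D) (pI : PredI P ar D) (F : Fml C P ar) : Prop :=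
  ∀ p : P, ∀ xs : Fin (ar p) → D, pI p xs → ∀ i, ∃ c ∈ F.consts, xs i = cI c

/-! ### Logic programs -/

def Term.varList : Term C → List ℕ
  | .var x => [x]
  | .const _ => []

def Fml.freeList : Fml C P ar → List ℕ
  | .atom p t => (List.finRange (ar p)).foldr (fun i l => (t i).varList ++ l) []
  | .eq t₁ t₂ => t₁.varList ++ t₂.varList
  | .bot => []
  | .and F G => F.freeList ++ G.freeList
  | .or F G => F.freeList ++ G.freeList
  | .imp F G => F.freeList ++ G.freeList
  | .all x F => F.freeList.filter (· ≠ x)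
  | .ex x F => F.freeList.filter (· ≠ x)

/-- Universal closure. -/
def Fml.closure (F : Fml C P ar) : Fml C P ar := F.freeList.foldr Fml.all F

def Fml.top : Fml C P ar := Fml.imp Fml.bot Fml.bot

def Atom.toFml (a : Atom C P ar) : Fml C P ar := Fml.atom a.1 a.2

/-- A nondisjunctive rule `A ← B, N` (`N` is required to be a negative formula
in the statements below). -/
structure NRule (C P : Type) (ar : P → ℕ) where
  head : Atom C P ar
  body : List (Atom C P ar)
  neg : Fml C P ar

/-- A nondisjunctive program. -/
abbrev NProg (C P : Type) (ar : P → ℕ) := List (NRule C P ar)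

def NRule.toFml (r : NRule C P ar) : Fml C P ar :=
  Fml.imp (r.body.foldr (fun a G => (Atom.toFml a).and G) r.neg) (Atom.toFml r.head)

/-- FOL-representation of a nondisjunctive program. -/
def NProg.toFml (Pr : NProg C P ar) : Fml C P ar :=
  Pr.foldr (fun r G => (Fml.closure (NRule.toFml r)).and G) Fml.top

/-- Terms occurring in `Y`. -/
def termsOf (Y : Set (Atom C P ar)) : Set (Term C) := {t | ∃ a ∈ Y, ∃ i, a.2 i = t}

def NRule.headVars (r : NRule C P ar) : Set ℕ := Atom.vars r.head

/-- One disjunct of `FES_Π(Y)`, evaluated under the valuation `w` of the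
variables of `Y` (the variables of the rule are implicitly renamed apart from `Y`:
they are interpreted by the existential valuation `s`, while terms of `Y` and the
`θ`-images of head variables are evaluated under `w`). -/
def NRule.FES (cI : C → D) (pI : PredI P ar D) (r : NRule C P ar)
    (Y : Set (Atom C P ar)) (w : ℕ → D) : Prop :=
  ∃ θ : ℕ → Option (Term C),
    (∀ x ∈ NRule.headVars r, ∃ t ∈ termsOf Y, θ x = some t) ∧
    (∀ x, x ∉ NRule.headVars r → θ x = none) ∧
    Atom.subst (fun x => (θ x).getD (Term.var x)) r.head ∈ Y ∧
    ∃ s : ℕ → D,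
      let v : ℕ → D := fun x => match θ x with
        | some t => t.eval cI w
        | none => s x
      (∀ b ∈ r.body, pI b.1 (fun i => (b.2 i).eval cI v)) ∧
      (NRule.neg r).sat cI pI v ∧
      (∀ b ∈ r.body, ∀ t' : Fin (ar b.1) → Term C, (⟨b.1, t'⟩ : Atom C P ar) ∈ Y →
        ¬ ∀ i, (b.2 i).eval cI v = (t' i).eval cI w)

/-- `FES_Π(Y)` under valuation `w`. -/
def NProg.FES (cI : C → D) (pI : PredI P ar D) (Pr : NProg C P ar)
    (Y : Set (Atom C P ar)) (w : ℕ → D) : Prop :=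
  ∃ r ∈ Pr, NRule.FES cI pI r Y w

/-- `I ⊨ FLF_Π(Y)`. -/
def NProg.satFLF (cI : C → D) (pI : PredI P ar D) (Pr : NProg C P ar)
    (Y : Set (Atom C P ar)) : Prop :=
  ∀ w : ℕ → D, (∀ a ∈ Y, Atom.holds cI pI w a) → NProg.FES cI pI Pr Y w

/-- `p(t)` depends on `q(t')` in the program `Pr`. -/
def NProg.depends (Pr : NProg C P ar) (a b : Atom C P ar) : Prop :=
  ∃ r ∈ Pr, NRule.head r = a ∧ b ∈ NRule.body r

/-- Edges of the first-order dependency graph of a nondisjunctive program. -/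
def NProg.foEdge (Pr : NProg C P ar) (a b : Atom C P ar) : Prop :=
  ∃ a0 b0 : Atom C P ar, NProg.depends Pr a0 b0 ∧ ∃ θ : ℕ → Term C,
    a0.subst θ = a ∧ b0.subst θ = b

/-- First-order loops of a nondisjunctive program. -/
def NProg.isFOLoop (Pr : NProg C P ar) (Y : Set (Atom C P ar)) : Prop :=
  Y.Finite ∧ Y.Nonempty ∧ SCin (NProg.foEdge Pr) Y

/-! ### Grounding (Herbrand universe `C`, constants denote themselves) -/

/-- Ground atoms of `σ(Π)^g`. -/
abbrev GAtom (C P : Type) (ar : P → ℕ) := Σ p : P, Fin (ar p) → C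

/-- The ground instance of an atom under an assignment of constants to variables. -/
def Atom.ground (v : ℕ → C) (a : Atom C P ar) : GAtom C P ar :=
  ⟨a.1, fun i => (a.2 i).eval id v⟩

/-- `I ⊨ LF_{Ground(Π)}(Y)` for a set `Y` of ground atoms and an Herbrand
interpretation given by `pI`. -/
def NProg.satLFg (pI : PredI P ar C) (Pr : NProg C P ar) (Y : Set (GAtom C P ar)) : Prop :=
  (∀ a ∈ Y, pI a.1 a.2) → ∃ r ∈ Pr, ∃ v : ℕ → C,
    Atom.ground v (NRule.head r) ∈ Y ∧
    (∀ b ∈ NRule.body r, Atom.ground v b ∉ Y) ∧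
    (∀ b ∈ NRule.body r, pI b.1 (fun i => (b.2 i).eval id v)) ∧
    (NRule.neg r).sat id pI v

/-- Edges of the dependency graph of `Ground(Π)`. -/
def NProg.gEdge (Pr : NProg C P ar) (a b : GAtom C P ar) : Prop :=
  ∃ r ∈ Pr, ∃ v : ℕ → C,
    Atom.ground v (NRule.head r) = a ∧ ∃ b0 ∈ NRule.body r, Atom.ground v b0 = b

/-- Loops of `Ground(Π)`. -/
def NProg.gLoop (Pr : NProg C P ar) (Y : Set (GAtom C P ar)) : Prop :=
  Y.Nonempty ∧ SCin (NProg.gEdge Pr) Y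

/-- A ground atom occurs in `Ground(Π)`. -/
def NProg.occursInGround (Pr : NProg C P ar) (a : GAtom C P ar) : Prop :=
  ∃ r ∈ Pr, ∃ v : ℕ → C,
    Atom.ground v (NRule.head r) = a ∨ (∃ b ∈ NRule.body r, Atom.ground v b = a) ∨
      ∃ a0 ∈ (NRule.neg r).atomsOf, Atom.ground v a0 = a

/-! ### Disjunctive programs -/

/-- A disjunctive rule `A ← B, N`. -/
structure DRule (C P : Type) (ar : P → ℕ) where
  head : List (Atom C P ar)
  body : List (Atom C P ar)
  neg : Fml C P ar

abbrev DProg (C P : Type) (ar : P → ℕ) := List (DRule C P ar)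

def DRule.toFml (r : DRule C P ar) : Fml C P ar :=
  Fml.imp (r.body.foldr (fun a G => (Atom.toFml a).and G) r.neg)
    (r.head.foldr (fun a G => (Atom.toFml a).or G) Fml.bot)

def DProg.toFml (Pr : DProg C P ar) : Fml C P ar :=
  Pr.foldr (fun r G => (Fml.closure (DRule.toFml r)).and G) Fml.top

def DRule.headVars (r : DRule C P ar) : Set ℕ :=
  {x | ∃ a ∈ r.head, ∃ i, a.2 i = Term.var x}

/-- One disjunct of the disjunctive `FES_Π(Y)` under valuation `w`
(`θ x = none` means `θ` maps `x` to itself). -/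
def DRule.FES (cI : C → D) (pI : PredI P ar D) (r : DRule C P ar)
    (Y : Set (Atom C P ar)) (w : ℕ → D) : Prop :=
  ∃ θ : ℕ → Option (Term C),
    (∀ x t, θ x = some t → x ∈ DRule.headVars r ∧ t ∈ termsOf Y) ∧
    (∃ a ∈ r.head, Atom.subst (fun x => (θ x).getD (Term.var x)) a ∈ Y) ∧
    ∃ s : ℕ → D,
      let v : ℕ → D := fun x => match θ x with
        | some t => t.eval cI w
        | none => s x
      (∀ b ∈ r.body, pI b.1 (fun i => (b.2 i).eval cI v)) ∧
      (DRule.neg r).sat cI pI v ∧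
      (∀ b ∈ r.body, ∀ t' : Fin (ar b.1) → Term C, (⟨b.1, t'⟩ : Atom C P ar) ∈ Y →
        ¬ ∀ i, (b.2 i).eval cI v = (t' i).eval cI w) ∧
      ¬ ∃ a ∈ r.head, pI a.1 (fun i => (a.2 i).eval cI v) ∧
          ∀ t' : Fin (ar a.1) → Term C, (⟨a.1, t'⟩ : Atom C P ar) ∈ Y →
            ¬ ∀ i, (a.2 i).eval cI v = (t' i).eval cI w

def DProg.FES (cI : C → D) (pI : PredI P ar D) (Pr : DProg C P ar)
    (Y : Set (Atom C P ar)) (w : ℕ → D) : Prop :=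
  ∃ r ∈ Pr, DRule.FES cI pI r Y w

/-! ### Extended programs -/

/-- Every occurrence of an implication belongs to (an occurrence of) a negative formula. -/
def Fml.impsProtected : Fml C P ar → Prop
  | .atom _ _ => True
  | .eq _ _ => True
  | .bot => True
  | .and F G => (Fml.and F G).isNegative ∨ (F.impsProtected ∧ G.impsProtected)
  | .or F G => (Fml.or F G).isNegative ∨ (F.impsProtected ∧ G.impsProtected)
  | .imp F G => (Fml.imp F G).isNegative
  | .all x F => (Fml.all x F).isNegative ∨ F.impsProtected
  | .ex x F => (Fml.ex x F).isNegative ∨ F.impsProtected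

/-- An extended rule `H ← G`. -/
structure ERule (C P : Type) (ar : P → ℕ) where
  head : Fml C P ar
  body : Fml C P ar

abbrev EProg (C P : Type) (ar : P → ℕ) := List (ERule C P ar)

def ERule.toFml (r : ERule C P ar) : Fml C P ar := Fml.imp r.body r.head

def EProg.toFml (Pr : EProg C P ar) : Fml C P ar :=
  Pr.foldr (fun r G => (Fml.closure (ERule.toFml r)).and G) Fml.top

/-- One disjunct of `EFES_Π(Y)` under valuation `w`: the rule head contains a strictly
positive occurrence of a predicate constant occurring in an atom of `Y`, and
`∃z(NFES_G(Y) ∧ ¬NFES_H(Y))`. -/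
def ERule.EFES (cI : C → D) (pI : PredI P ar D) (r : ERule C P ar)
    (Y : Set (Atom C P ar)) (w : ℕ → D) : Prop :=
  (∃ p : P, (∃ t, (⟨p, t⟩ : Atom C P ar) ∈ (ERule.head r).spAtoms) ∧
      ∃ t', (⟨p, t'⟩ : Atom C P ar) ∈ Y) ∧
  ∃ s : ℕ → D, (ERule.body r).satNFES cI pI Y w s ∧ ¬ (ERule.head r).satNFES cI pI Y w s

def EProg.EFES (cI : C → D) (pI : PredI P ar D) (Pr : EProg C P ar)
    (Y : Set (Atom C P ar)) (w : ℕ → D) : Prop :=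
  ∃ r ∈ Pr, ERule.EFES cI pI r Y w

/-- A disjunctive rule viewed as an extended rule. -/
def DRule.toERule (r : DRule C P ar) : ERule C P ar :=
  ⟨r.head.foldr (fun a G => (Atom.toFml a).or G) Fml.bot,
   r.body.foldr (fun a G => (Atom.toFml a).and G) r.neg⟩


/- `NFES_F(Y)` only strengthens `F`: it adds disequalities to atoms and keeps `F → G` as a
conjunct of every implication. In a negative formula no atom occurs outside an antecedent,
so the strengthened atoms never matter and the converse holds as well. -/

theorem Fml.sat_of_satNFES {C P D : Type} {ar : P → ℕ} {cI : C → D} {pI : PredI P ar D}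
    {Y : Set (Atom C P ar)} {w : ℕ → D} :
    ∀ (F : Fml C P ar) (v : ℕ → D), F.satNFES cI pI Y w v → F.sat cI pI v
  | .atom _ _, _, h => h.1
  | .eq _ _, _, h => h
  | .bot, _, h => h
  | .and F G, v, h => ⟨F.sat_of_satNFES v h.1, G.sat_of_satNFES v h.2⟩
  | .or F G, v, h => h.imp (F.sat_of_satNFES v) (G.sat_of_satNFES v)
  | .imp _ _, _, h => h.2
  | .all _ F, _, h => fun d => F.sat_of_satNFES _ (h d)
  | .ex _ F, _, h => h.imp fun _ => F.sat_of_satNFES _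

theorem statement_18_general {C P D : Type} {ar : P → ℕ}
    (F : Fml C P ar) (hFneg : F.isNegative)
    (Y : Set (Atom C P ar))
    (cI : C → D) (pI : PredI P ar D) (w v : ℕ → D) :
    F.satNFES cI pI Y w v ↔ F.sat cI pI v := by
  induction F generalizing v with
  | atom _ _ => nomatch hFneg
  | eq _ _ => rfl
  | bot => rfl
  | and F G ihF ihG =>
    obtain ⟨hF, hG⟩ := Bool.and_eq_true_iff.mp hFneg
    exact and_congr (ihF hF v) (ihG hG v)
  | or F G ihF ihG =>
    obtain ⟨hF, hG⟩ := Bool.and_eq_true_iff.mp hFneg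
    exact or_congr (ihF hF v) (ihG hG v)
  | imp F G _ ihG =>
    exact ⟨And.right, fun h =>
      ⟨fun hF => (ihG hFneg v).mpr (h (F.sat_of_satNFES v hF)), h⟩⟩
  | all _ _ ih => exact forall_congr' fun d => ih hFneg _
  | ex _ _ ih => exact exists_congr fun d => ih hFneg _

/-- Lemma 6: for any negative formula `F` and any finite set `Y` of
non-equality atoms, the universal closure of `NFES_F(Y) ↔ F` is logically valid. -/
theorem statement_18 {C P D : Type} {ar : P → ℕ}
    (F : Fml C P ar) (hFneg : F.isNegative)
    (Y : Set (Atom C P ar)) (hYfin : Y.Finite)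
    (cI : C → D) (pI : PredI P ar D) (w v : ℕ → D) :
    F.satNFES cI pI Y w v ↔ F.sat cI pI v :=
  statement_18_general F hFneg Y cI pI w v

end SMLF
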